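/- Let n ≥ 1, c > 0, C₀ > 0 and 0 < α < 1. Let u be a strong solution of ∂_t u − Δu = χ_{u>0} on Q_1 such that u(y,t₂) − u(y,t₁) ≥ c(t₂ − t₁) whenever (y,t₁), (y,t₂) ∈ Q_1 with t₁ ≤ t₂, and such that |∇u(y,s) − ∇u(z,τ)| ≤ C₀(|y − z|^α + |s − τ|^{α/2}) for all (y,s), (z,τ) ∈ Q_1. Let (x,t) ∈ Γ ∩ Q_{1/2} with ∇u(x,t) = 0. Then every free boundary point (y,s) ∈ Γ ∩ Q_{1/2} satisfies |s − t| ≤ (C₀/(c(α+1))) |y − x|^{1+α}. In particular, the graph function of Γ over the spatial variable is differentiable at x with vanishing gradient there. -/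

import Mathlib

open MeasureTheory Metric Set Filter

noncomputable section

abbrev Spc (n : ℕ) := EuclideanSpace ℝ (Fin n)

/-- Parabolic cylinder `Q_r(x,t)`. -/
def Qcyl (n : ℕ) (r : ℝ) (x : Spc n) (t : ℝ) : Set (Spc n × ℝ) :=
  {p : Spc n × ℝ | ‖p.1 - x‖ + Real.sqrt |p.2 - t| < r}

/-- Time derivative `∂ₜ u`. -/
def timeDeriv {n : ℕ} (u : Spc n × ℝ → ℝ) (p : Spc n × ℝ) : ℝ :=
  deriv (fun s => u (p.1, s)) p.2

/-- Spatial gradient `∇u`. -/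
def spGrad {n : ℕ} (u : Spc n × ℝ → ℝ) (p : Spc n × ℝ) : Spc n :=
  gradient (fun y => u (y, p.2)) p.1

/-- The point `p` translated by `h` in the `i`-th spatial direction. -/
def dirPoint {n : ℕ} (p : Spc n × ℝ) (i : Fin n) (h : ℝ) : Spc n × ℝ :=
  (p.1 + h • EuclideanSpace.single i (1 : ℝ), p.2)

/-- Second spatial partial `∂ᵢⱼ u`, as derivative of the `i`-th component of
the spatial gradient in direction `j`. -/
def secondPartial {n : ℕ} (u : Spc n × ℝ → ℝ) (i j : Fin n) (p : Spc n × ℝ) : ℝ :=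
  deriv (fun h : ℝ => spGrad u (dirPoint p j h) i) 0

/-- Spatial Laplacian `Δu`. -/
def lapl {n : ℕ} (u : Spc n × ℝ → ℝ) (p : Spc n × ℝ) : ℝ :=
  ∑ i, secondPartial u i i p

/-- `u` is a strong solution of `∂ₜ u - Δu = g · χ_{u>0}` on `U`:
continuous with continuous spatial gradient, and a.e. on `U` the time derivative and
the pure second spatial partials exist and the equation holds. -/
def IsStrongSolution {n : ℕ} (u : Spc n × ℝ → ℝ) (g : ℝ) (U : Set (Spc n × ℝ)) : Prop :=
  ContinuousOn u U ∧
  (∀ p ∈ U, HasGradientAt (fun y => u (y, p.2)) (spGrad u p) p.1) ∧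
  ContinuousOn (fun p => spGrad u p) U ∧
  (∀ᵐ p ∂(volume.restrict U),
    HasDerivAt (fun s => u (p.1, s)) (timeDeriv u p) p.2 ∧
    (∀ i : Fin n, HasDerivAt (fun h : ℝ => spGrad u (dirPoint p i h) i) (secondPartial u i i p) 0) ∧
    timeDeriv u p - lapl u p = (if 0 < u p then g else 0))

/-- The free boundary `Γ = ∂{u>0}` relative to the open set `U`. -/
def freeBdry {n : ℕ} (u : Spc n × ℝ → ℝ) (U : Set (Spc n × ℝ)) : Set (Spc n × ℝ) :=
  U ∩ frontier {p : Spc n × ℝ | 0 < u p}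

/-!
At free boundary points `u = 0`. Since `∇u(x,t) = 0`, the Hölder bound gives
`|∇u(z,t)| ≤ C₀ |z - x|^α`, and the mean value inequality along the segment from `x` to `y`
yields `|u(y,t)| ≤ C₀ |y - x|^(1+α) / (1+α)`. As `u(y,s) = 0` as well, the growth condition in
time gives `c |s - t| ≤ |u(y,t) - u(y,s)| = |u(y,t)|`. Finally, a bound of order
`|y - x|^(1+α)` with `α > 0` is `o(|y - x|)`, i.e. a zero derivative.
-/

open scoped Topology

theorem isOpen_Qcyl (n : ℕ) (r : ℝ) (x : Spc n) (t : ℝ) : IsOpen (Qcyl n r x t) :=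
  isOpen_lt (by fun_prop) continuous_const

theorem eq_zero_of_mem_freeBdry {n : ℕ} {u : Spc n × ℝ → ℝ} {U : Set (Spc n × ℝ)}
    (hU : IsOpen U) (hu : ContinuousOn u U) {p : Spc n × ℝ} (hp : p ∈ freeBdry u U) :
    u p = 0 := by
  have hup : ContinuousAt u p := hu.continuousAt (hU.mem_nhds hp.1)
  refine le_antisymm ?_ ?_
  · by_contra! hpos
    exact hp.2.2 (mem_interior_iff_mem_nhds.mpr (continuousAt_const.eventually_lt hup hpos))
  · by_contra! hneg
    obtain ⟨q, hq, hqpos⟩ :=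
      mem_closure_iff_nhds.mp hp.2.1 _ (hup.eventually_lt continuousAt_const hneg)
    exact lt_asymm (show u q < 0 from hq) (show 0 < u q from hqpos)

theorem mem_Qcyl_of_mem_segment {n : ℕ} {x y z : Spc n} {r t s : ℝ}
    (hx : (x, t) ∈ Qcyl n r 0 0) (hy : (y, s) ∈ Qcyl n r 0 0)
    (hz : z ∈ segment ℝ x y) : (z, t) ∈ Qcyl n (2 * r) 0 0 := by
  simp only [Qcyl, sub_zero, mem_ofPred_eq] at hx hy ⊢
  have hzball : z ∈ ball (0 : Spc n) r :=
    (convex_ball _ _).segment_subset (mem_ball_zero_iff.mpr (by linarith [Real.sqrt_nonneg |t|]))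
      (mem_ball_zero_iff.mpr (by linarith [Real.sqrt_nonneg |s|])) hz
  linarith [mem_ball_zero_iff.mp hzball, norm_nonneg x]

theorem abs_sub_le_of_norm_fderiv_le_rpow {E : Type*} [NormedAddCommGroup E] [NormedSpace ℝ E]
    {f : E → ℝ} {f' : E → E →L[ℝ] ℝ} {x y : E} {C α : ℝ} (hα : 0 ≤ α)
    (hf : ∀ z ∈ segment ℝ x y, HasFDerivAt f (f' z) z)
    (bound : ∀ z ∈ segment ℝ x y, ‖f' z‖ ≤ C * ‖z - x‖ ^ α) :
    |f y - f x| ≤ C * ‖y - x‖ ^ (1 + α) / (1 + α) := by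
  set v := y - x
  have hline : ∀ τ ∈ Icc (0 : ℝ) 1, x + τ • v ∈ segment ℝ x y := fun τ hτ =>
    segment_eq_image' ℝ x y ▸ mem_image_of_mem _ hτ
  have hderiv : ∀ τ ∈ Icc (0 : ℝ) 1,
      HasDerivAt (fun τ : ℝ => f (x + τ • v) - f x) (f' (x + τ • v) v) τ := fun τ hτ => by
    simpa using ((hf _ (hline τ hτ)).comp_hasDerivAt τ
      (((hasDerivAt_id τ).smul_const v).const_add x)).sub_const (f x)
  have hB : ∀ τ : ℝ, HasDerivAt (fun τ : ℝ => C * ‖v‖ ^ (1 + α) * τ ^ (1 + α) / (1 + α))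
      (C * ‖v‖ ^ (1 + α) * τ ^ α) τ := fun τ => by
    refine (((Real.hasDerivAt_rpow_const (Or.inr (le_add_of_nonneg_right hα))).const_mul
      (C * ‖v‖ ^ (1 + α))).div_const (1 + α)).congr_deriv ?_
    rw [add_sub_cancel_left]
    field_simp
  have key := image_norm_le_of_norm_deriv_right_le_deriv_boundary
    (fun τ hτ => (hderiv τ hτ).continuousAt.continuousWithinAt)
    (fun τ hτ => (hderiv τ (Ico_subset_Icc_self hτ)).hasDerivWithinAt)
    (by simp [(by positivity : (1 + α) ≠ 0)] : ‖f (x + (0 : ℝ) • v) - f x‖ ≤ _) hB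
    (fun τ hτ => ?_) (right_mem_Icc.mpr zero_le_one)
  · simpa [v] using key
  calc ‖f' (x + τ • v) v‖ ≤ ‖f' (x + τ • v)‖ * ‖v‖ := (f' _).le_opNorm v
    _ ≤ C * ‖τ • v‖ ^ α * ‖v‖ := by
      simpa using mul_le_mul_of_nonneg_right (bound _ (hline τ (Ico_subset_Icc_self hτ)))
        (norm_nonneg v)
    _ = C * ‖v‖ ^ (1 + α) * τ ^ α := by
      rw [norm_smul, Real.norm_of_nonneg hτ.1, Real.mul_rpow hτ.1 (norm_nonneg v),
        Real.rpow_add' (norm_nonneg v) (by positivity), Real.rpow_one]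
      ring

theorem hasFDerivWithinAt_zero_of_norm_sub_le_rpow {E F : Type*} [NormedAddCommGroup E]
    [NormedSpace ℝ E] [NormedAddCommGroup F] [NormedSpace ℝ F] {f : E → F} {s : Set E} {x : E}
    {K α : ℝ} (hα : 0 < α) (h : ∀ z ∈ s, ‖f z - f x‖ ≤ K * ‖z - x‖ ^ (1 + α)) :
    HasFDerivWithinAt f (0 : E →L[ℝ] F) s x := by
  rw [hasFDerivWithinAt_iff_isLittleO, ← Asymptotics.isLittleO_norm_right]
  have hsmall : (fun z : E => ‖z - x‖ ^ α) =o[𝓝 x] fun _ => (1 : ℝ) := by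
    rw [Asymptotics.isLittleO_one_iff]
    have hcont : ContinuousAt (fun z : E => ‖z - x‖ ^ α) x :=
      (continuous_norm.comp (continuous_sub_right x)).continuousAt.rpow_const (Or.inr hα.le)
    simpa [Real.zero_rpow hα.ne'] using hcont.tendsto
  have hrpow : (fun z => ‖z - x‖ ^ (1 + α)) =o[𝓝 x] fun z => ‖z - x‖ :=
    (hsmall.mul_isBigO (Asymptotics.isBigO_refl _ _)).congr
      (fun z => by rw [Real.rpow_add' (norm_nonneg _) (by positivity), Real.rpow_one, mul_comm])
      (fun z => one_mul _)
  refine (Asymptotics.IsBigO.of_bound K ?_).trans_isLittleO (hrpow.mono nhdsWithin_le_nhds)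
  filter_upwards [self_mem_nhdsWithin] with z hz
  simpa [abs_of_nonneg (Real.rpow_nonneg (norm_nonneg (z - x)) _)] using h z hz

theorem mul_abs_sub_le_abs_sub_of_growth {X : Type*} {u : X × ℝ → ℝ} {U : Set (X × ℝ)} {c : ℝ}
    (hgrowth : ∀ (y : X) (t₁ t₂ : ℝ), (y, t₁) ∈ U → (y, t₂) ∈ U → t₁ ≤ t₂ →
      c * (t₂ - t₁) ≤ u (y, t₂) - u (y, t₁))
    {y : X} {s t : ℝ} (hs : (y, s) ∈ U) (ht : (y, t) ∈ U) :
    c * |s - t| ≤ |u (y, s) - u (y, t)| := by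
  rcases le_total t s with hts | hst
  · calc c * |s - t| = c * (s - t) := by rw [abs_of_nonneg (sub_nonneg.2 hts)]
      _ ≤ u (y, s) - u (y, t) := hgrowth y t s ht hs hts
      _ ≤ _ := le_abs_self _
  · calc c * |s - t| = c * (t - s) := by rw [abs_sub_comm, abs_of_nonneg (sub_nonneg.2 hst)]
      _ ≤ u (y, t) - u (y, s) := hgrowth y s t hs ht hst
      _ ≤ _ := by rw [abs_sub_comm]; exact le_abs_self _

theorem abs_sub_le_of_spGrad_holder {n : ℕ} {u : Spc n × ℝ → ℝ} {U : Set (Spc n × ℝ)}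
    {C₀ α : ℝ} (hα : 0 < α)
    (hgradu : ∀ p ∈ U, HasGradientAt (fun y => u (y, p.2)) (spGrad u p) p.1)
    (hgrad : ∀ p q : Spc n × ℝ, p ∈ U → q ∈ U →
      ‖spGrad u p - spGrad u q‖ ≤ C₀ * (‖p.1 - q.1‖ ^ α + |p.2 - q.2| ^ (α / 2)))
    {x y : Spc n} {t : ℝ} (hseg : ∀ z ∈ segment ℝ x y, (z, t) ∈ U)
    (hgrad0 : spGrad u (x, t) = 0) :
    |u (y, t) - u (x, t)| ≤ C₀ * ‖y - x‖ ^ (1 + α) / (1 + α) :=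
  abs_sub_le_of_norm_fderiv_le_rpow (f := fun z => u (z, t)) hα.le
    (fun z hz => (hgradu _ (hseg z hz)).hasFDerivAt) fun z hz => by
      simpa [hgrad0, Real.zero_rpow (half_pos hα).ne'] using
        hgrad (z, t) (x, t) (hseg z hz) (hseg x (left_mem_segment ℝ x y))

theorem stmt11_general (n : ℕ) (c C₀ α : ℝ) (hc : 0 < c)
    (hα : 0 < α) (u : Spc n × ℝ → ℝ)
    (hsol : IsStrongSolution u 1 (Qcyl n 1 0 0))
    (hmono : ∀ (y : Spc n) (t₁ t₂ : ℝ), (y, t₁) ∈ Qcyl n 1 0 0 → (y, t₂) ∈ Qcyl n 1 0 0 →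
      t₁ ≤ t₂ → c * (t₂ - t₁) ≤ u (y, t₂) - u (y, t₁))
    (hgrad : ∀ p q : Spc n × ℝ, p ∈ Qcyl n 1 0 0 → q ∈ Qcyl n 1 0 0 →
      ‖spGrad u p - spGrad u q‖ ≤ C₀ * (‖p.1 - q.1‖ ^ α + |p.2 - q.2| ^ (α / 2)))
    (x : Spc n) (t : ℝ)
    (hxt : (x, t) ∈ freeBdry u (Qcyl n 1 0 0) ∩ Qcyl n (1/2) 0 0)
    (hgrad0 : spGrad u (x, t) = 0) :
    (∀ (y : Spc n) (s : ℝ), (y, s) ∈ freeBdry u (Qcyl n 1 0 0) ∩ Qcyl n (1/2) 0 0 →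
      |s - t| ≤ (C₀ / (c * (α + 1))) * ‖y - x‖ ^ (1 + α)) ∧
    ∀ H : Spc n → ℝ,
      (∀ p ∈ freeBdry u (Qcyl n 1 0 0) ∩ Qcyl n (1/2) 0 0, H p.1 = p.2) →
      HasFDerivWithinAt H (0 : Spc n →L[ℝ] ℝ)
        (Prod.fst '' (freeBdry u (Qcyl n 1 0 0) ∩ Qcyl n (1/2) 0 0)) x := by
  obtain ⟨hucont, hgradu, -, -⟩ := hsol
  have hzero : ∀ p ∈ freeBdry u (Qcyl n 1 0 0), u p = 0 := fun p hp =>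
    eq_zero_of_mem_freeBdry (isOpen_Qcyl n 1 0 0) hucont hp
  have hbound : ∀ (y : Spc n) (s : ℝ), (y, s) ∈ freeBdry u (Qcyl n 1 0 0) ∩ Qcyl n (1/2) 0 0 →
      |s - t| ≤ (C₀ / (c * (α + 1))) * ‖y - x‖ ^ (1 + α) := by
    rintro y s ⟨hys, hyQ⟩
    have hseg : ∀ z ∈ segment ℝ x y, (z, t) ∈ Qcyl n 1 0 0 := fun z hz => by
      simpa using mem_Qcyl_of_mem_segment hxt.2 hyQ hz
    have htime := mul_abs_sub_le_abs_sub_of_growth hmono hys.1 (hseg y (right_mem_segment ℝ x y))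
    have hspace := abs_sub_le_of_spGrad_holder hα hgradu hgrad hseg hgrad0
    rw [hzero _ hys, zero_sub, abs_neg] at htime
    rw [hzero _ hxt.1, sub_zero, le_div_iff₀ (by positivity)] at hspace
    rw [div_mul_eq_mul_div, le_div_iff₀ (by positivity)]
    calc |s - t| * (c * (α + 1)) = c * |s - t| * (1 + α) := by ring
      _ ≤ |u (y, t)| * (1 + α) := by gcongr
      _ ≤ C₀ * ‖y - x‖ ^ (1 + α) := hspace
  refine ⟨hbound, fun H hH => hasFDerivWithinAt_zero_of_norm_sub_le_rpow
    (K := C₀ / (c * (α + 1))) hα ?_⟩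
  rintro _ ⟨⟨y, s⟩, hys, rfl⟩
  rw [hH _ hys, hH _ hxt, Real.norm_eq_abs]
  exact hbound y s hys

/-- at a free boundary point where the spatial gradient vanishes, nearby free
boundary points satisfy `|s - t| ≤ (C₀/(c(α+1)))|y - x|^{1+α}`; in particular the graph of
the free boundary over the spatial variable is differentiable at `x` with vanishing
gradient. -/
theorem stmt11 (n : ℕ) (hn : 1 ≤ n) (c C₀ α : ℝ) (hc : 0 < c) (hC₀ : 0 < C₀)
    (hα : 0 < α) (hα1 : α < 1) (u : Spc n × ℝ → ℝ)
    (hsol : IsStrongSolution u 1 (Qcyl n 1 0 0))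
    (hmono : ∀ (y : Spc n) (t₁ t₂ : ℝ), (y, t₁) ∈ Qcyl n 1 0 0 → (y, t₂) ∈ Qcyl n 1 0 0 →
      t₁ ≤ t₂ → c * (t₂ - t₁) ≤ u (y, t₂) - u (y, t₁))
    (hgrad : ∀ p q : Spc n × ℝ, p ∈ Qcyl n 1 0 0 → q ∈ Qcyl n 1 0 0 →
      ‖spGrad u p - spGrad u q‖ ≤ C₀ * (‖p.1 - q.1‖ ^ α + |p.2 - q.2| ^ (α / 2)))
    (x : Spc n) (t : ℝ)
    (hxt : (x, t) ∈ freeBdry u (Qcyl n 1 0 0) ∩ Qcyl n (1/2) 0 0)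
    (hgrad0 : spGrad u (x, t) = 0) :
    (∀ (y : Spc n) (s : ℝ), (y, s) ∈ freeBdry u (Qcyl n 1 0 0) ∩ Qcyl n (1/2) 0 0 →
      |s - t| ≤ (C₀ / (c * (α + 1))) * ‖y - x‖ ^ (1 + α)) ∧
    ∀ H : Spc n → ℝ,
      (∀ p ∈ freeBdry u (Qcyl n 1 0 0) ∩ Qcyl n (1/2) 0 0, H p.1 = p.2) →
      HasFDerivWithinAt H (0 : Spc n →L[ℝ] ℝ)
        (Prod.fst '' (freeBdry u (Qcyl n 1 0 0) ∩ Qcyl n (1/2) 0 0)) x :=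
  stmt11_general n c C₀ α hc hα u hsol hmono hgrad x t hxt hgrad0

end
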